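/- arXiv:2408.04093 — 2 statements merged into one kernel-verified Lean document; each statement's English description precedes it below -/
import Mathlib

section
/- Correctness of chunked flash-attention recombination with local maxima: partition {1,...,N} into chunks B₁,...,B_p, let m_j = max_{a∈B_j} q·kₐ, lse_j = log(∑_{a∈B_j} exp(q·kₐ)), o_j = (∑_{a∈B_j} exp(q·kₐ) vₐ)/(∑_{a∈B_j} exp(q·kₐ)), and global max M = max_j lse_j. Then ∑_j o_j · exp(lse_j − M) divided by ∑_j exp(lse_j − M) equals the full attention output (∑_{a=1}^N exp(q·kₐ) vₐ)/(∑_{a=1}^N exp(q·kₐ)). -/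
/-! Since `exp (lse_j - M) = Z_j * exp (-M)` with `Z_j` the partition function of chunk `j`, the
factor `exp (-M)` cancels between numerator and denominator, each local output `o_j` is weighted by
its own normaliser `Z_j`, and the two resulting double sums over the chunks of a partition collapse
to the full sums. -/

open Finset Function Real

theorem Finset.sum_sum_eq_sum_of_pairwise_disjoint_cover {ι α β : Type*} [Fintype ι] [Fintype α]
    [AddCommMonoid β] (B : ι → Finset α) (hdisj : Pairwise (Disjoint on B))
    (hcover : ∀ a, ∃ j, a ∈ B j) (g : α → β) :
    ∑ j, ∑ a ∈ B j, g a = ∑ a, g a := by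
  classical
  have hunion : univ.biUnion B = univ :=
    eq_univ_iff_forall.mpr fun a =>
      let ⟨j, hj⟩ := hcover a
      mem_biUnion.mpr ⟨j, mem_univ j, hj⟩
  rw [← sum_biUnion fun i _ j _ hij => hdisj hij, hunion]

theorem Real.exp_log_sub_eq_mul_exp_neg {x : ℝ} (hx : 0 < x) (y : ℝ) :
    exp (log x - y) = x * exp (-y) := by
  rw [sub_eq_add_neg, exp_add, exp_log hx]

theorem Real.sum_div_mul_exp_log_sub_div_sum_exp_log_sub {ι : Type*} (s : Finset ι)
    (n w : ι → ℝ) (hw : ∀ j ∈ s, 0 < w j) (M : ℝ) :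
    (∑ j ∈ s, n j / w j * exp (log (w j) - M)) / ∑ j ∈ s, exp (log (w j) - M)
      = (∑ j ∈ s, n j) / ∑ j ∈ s, w j := by
  have hnum : ∀ j ∈ s, n j / w j * exp (log (w j) - M) = n j * exp (-M) := fun j hj => by
    rw [exp_log_sub_eq_mul_exp_neg (hw j hj), ← mul_assoc, div_mul_cancel₀ _ (hw j hj).ne']
  rw [sum_congr rfl hnum, sum_congr rfl fun j hj => exp_log_sub_eq_mul_exp_neg (hw j hj) M,
    ← sum_mul, ← sum_mul, mul_div_mul_right _ _ (exp_ne_zero _)]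

theorem flash_attention_recombination_general (N d p : ℕ)
    (q : Fin d → ℝ) (k v : Fin N → Fin d → ℝ)
    (B : Fin p → Finset (Fin N))
    (hdisj : ∀ i j, i ≠ j → Disjoint (B i) (B j))
    (hne : ∀ j, (B j).Nonempty)
    (hcover : ∀ a : Fin N, ∃ j, a ∈ B j)
    (M : ℝ)
    (A : Fin d) :
    (∑ j, ((∑ a ∈ B j, Real.exp (∑ i, q i * k a i) * v a A)
            / (∑ a ∈ B j, Real.exp (∑ i, q i * k a i)))
          * Real.exp (Real.log (∑ a ∈ B j, Real.exp (∑ i, q i * k a i)) - M))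
        / (∑ j, Real.exp (Real.log (∑ a ∈ B j, Real.exp (∑ i, q i * k a i)) - M))
      = (∑ a, Real.exp (∑ i, q i * k a i) * v a A)
        / ∑ a, Real.exp (∑ i, q i * k a i) := by
  have hZ : ∀ j ∈ univ, 0 < ∑ a ∈ B j, exp (∑ i, q i * k a i) := fun j _ =>
    sum_pos (fun a _ => exp_pos _) (hne j)
  rw [sum_div_mul_exp_log_sub_div_sum_exp_log_sub univ
      (fun j => ∑ a ∈ B j, exp (∑ i, q i * k a i) * v a A) _ hZ M,
    sum_sum_eq_sum_of_pairwise_disjoint_cover B hdisj hcover,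
    sum_sum_eq_sum_of_pairwise_disjoint_cover B hdisj hcover]

/-- Correctness of chunked flash-attention recombination with local log-sum-exps:
rescaling local outputs by exp(lse_j − M) and renormalizing recovers full attention. -/
theorem flash_attention_recombination (N d p : ℕ) (hN : 1 ≤ N) (hp : 1 ≤ p)
    (q : Fin d → ℝ) (k v : Fin N → Fin d → ℝ)
    (B : Fin p → Finset (Fin N))
    (hdisj : ∀ i j, i ≠ j → Disjoint (B i) (B j))
    (hne : ∀ j, (B j).Nonempty)
    (hcover : ∀ a : Fin N, ∃ j, a ∈ B j)
    (M : ℝ)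
    (hM : M = Finset.univ.sup' ⟨⟨0, hp⟩, Finset.mem_univ _⟩
        (fun j => Real.log (∑ a ∈ B j, Real.exp (∑ i, q i * k a i))))
    (A : Fin d) :
    (∑ j, ((∑ a ∈ B j, Real.exp (∑ i, q i * k a i) * v a A)
            / (∑ a ∈ B j, Real.exp (∑ i, q i * k a i)))
          * Real.exp (Real.log (∑ a ∈ B j, Real.exp (∑ i, q i * k a i)) - M))
        / (∑ j, Real.exp (Real.log (∑ a ∈ B j, Real.exp (∑ i, q i * k a i)) - M))
      = (∑ a, Real.exp (∑ i, q i * k a i) * v a A)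
        / ∑ a, Real.exp (∑ i, q i * k a i) :=
  flash_attention_recombination_general N d p q k v B hdisj hne hcover M A
end

section
/- Communication volume comparison: for all integers p ≥ 2, b ≥ 1, t ≥ 1, d ≥ 1, n_h ≥ 1 with n_h ≤ t·d, the Tree Attention communication volume 2·((p−1)/p)·(b·d + 2·b·n_h) is strictly less than the Ring Attention communication volume 2·b·t·d·p. -/
/-!
Write `V = b t d`, the per-device KV-chunk size. Since `t ≥ 1` and `n_h ≤ t d`, the Allreduce
payload satisfies `b d + 2 b n_h ≤ 3 V`, so the tree volume is at most `2 V · 3 (p - 1) / p`.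
The ring volume is `2 V · p`, and `3 (p - 1) < p²` for every real `p`, because
`p² - 3 p + 3 = (p - 3/2)² + 3/4`.
-/

theorem three_mul_sub_one_div_lt_self {p : ℝ} (hp : 0 < p) : 3 * ((p - 1) / p) < p := by
  rw [mul_div_assoc', div_lt_iff₀ hp]
  nlinarith [sq_nonneg (p - 3 / 2)]

theorem add_two_mul_le_three_mul {b t d n : ℝ} (hb : 0 ≤ b) (hd : 0 ≤ d) (ht : 1 ≤ t)
    (hn : n ≤ t * d) : b * d + 2 * b * n ≤ 3 * (b * t * d) := by
  have hbd : b * d ≤ b * t * d := by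
    simpa [mul_comm, mul_left_comm] using mul_le_mul_of_nonneg_left ht (mul_nonneg hb hd)
  have hbn : b * n ≤ b * t * d := by
    simpa [mul_assoc] using mul_le_mul_of_nonneg_left hn hb
  linarith

theorem two_mul_sub_one_div_mul_lt {p V X : ℝ} (hp : 1 ≤ p) (hV : 0 < V) (hX : X ≤ 3 * V) :
    2 * ((p - 1) / p) * X < 2 * V * p := by
  have hp0 : 0 < p := by linarith
  calc 2 * ((p - 1) / p) * X ≤ 2 * ((p - 1) / p) * (3 * V) := by
        gcongr
    _ = 2 * V * (3 * ((p - 1) / p)) := by ring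
    _ < 2 * V * p := by gcongr; exact three_mul_sub_one_div_lt_self hp0

theorem tree_comm_volume_lt_ring_general (p b t d nh : ℕ)
    (hp : 2 ≤ p) (hb : 1 ≤ b) (ht : 1 ≤ t) (hd : 1 ≤ d)
    (h : nh ≤ t * d) :
    2 * (((p : ℝ) - 1) / (p : ℝ)) * ((b : ℝ) * d + 2 * b * nh)
      < 2 * (b : ℝ) * t * d * p := by
  have hV : (0 : ℝ) < b * t * d := by
    have : 0 < b * t * d := by positivity
    exact_mod_cast this
  have hpayload : (b : ℝ) * d + 2 * b * nh ≤ 3 * (b * t * d) :=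
    add_two_mul_le_three_mul (Nat.cast_nonneg b) (Nat.cast_nonneg d) (by exact_mod_cast ht)
      (by exact_mod_cast h)
  calc _ < 2 * ((b : ℝ) * t * d) * p :=
        two_mul_sub_one_div_mul_lt (Nat.one_le_cast.mpr (by omega)) hV hpayload
    _ = _ := by ring

/-- Tree Attention's communication volume is strictly less than Ring Attention's. -/
theorem tree_comm_volume_lt_ring (p b t d nh : ℕ)
    (hp : 2 ≤ p) (hb : 1 ≤ b) (ht : 1 ≤ t) (hd : 1 ≤ d) (hnh : 1 ≤ nh)
    (h : nh ≤ t * d) :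
    2 * (((p : ℝ) - 1) / (p : ℝ)) * ((b : ℝ) * d + 2 * b * nh)
      < 2 * (b : ℝ) * t * d * p :=
  tree_comm_volume_lt_ring_general p b t d nh hp hb ht hd h
end
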